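/- For real parameters m ≥ 0 and q > 0, the Bardeen regular black hole satisfies the weak energy condition globally: for every r ∈ ℝ one has ρ(r) ≥ 0, ρ(r) + p_r(r) ≥ 0, and ρ(r) + p_t(r) ≥ 0. -/
import Mathlib


/-- Energy density of the Bardeen regular black hole. -/
noncomputable def bardeenRho (m q r : ℝ) : ℝ :=
  6 * m * q ^ 2 / (8 * Real.pi * (r ^ 2 + q ^ 2) ^ ((5 : ℝ) / 2))

/-- Radial pressure of the Bardeen regular black hole. -/
noncomputable def bardeenPr (m q r : ℝ) : ℝ := - bardeenRho m q r

/-- Transverse pressure of the Bardeen regular black hole. -/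
noncomputable def bardeenPt (m q r : ℝ) : ℝ :=
  3 * m * q ^ 2 * (3 * r ^ 2 - 2 * q ^ 2) /
    (8 * Real.pi * (r ^ 2 + q ^ 2) ^ ((7 : ℝ) / 2))

/-- For `m ≥ 0` and `q > 0`, the Bardeen regular black hole satisfies the
weak energy condition globally. -/
theorem bardeen_WEC (m q : ℝ) (hm : 0 ≤ m) (hq : 0 < q) (r : ℝ) :
    0 ≤ bardeenRho m q r ∧
    0 ≤ bardeenRho m q r + bardeenPr m q r ∧
    0 ≤ bardeenRho m q r + bardeenPt m q r := by
  have hs : (0:ℝ) < r ^ 2 + q ^ 2 := by positivity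
  have hkey : (r ^ 2 + q ^ 2) ^ ((7:ℝ)/2)
      = (r ^ 2 + q ^ 2) ^ ((5:ℝ)/2) * (r ^ 2 + q ^ 2) := by
    rw [show ((7:ℝ)/2) = 5/2 + 1 by norm_num, Real.rpow_add hs, Real.rpow_one]
  have h52 : (0:ℝ) < (r ^ 2 + q ^ 2) ^ ((5:ℝ)/2) := Real.rpow_pos_of_pos hs _
  have hrho : 0 ≤ bardeenRho m q r := by
    unfold bardeenRho
    have hpi := Real.pi_pos
    positivity
  refine ⟨hrho, ?_, ?_⟩
  · simp [bardeenPr]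
  · have heq : bardeenRho m q r + bardeenPt m q r
        = 15 * m * q ^ 2 * r ^ 2 /
          (8 * Real.pi * (r ^ 2 + q ^ 2) ^ ((5:ℝ)/2) * (r ^ 2 + q ^ 2)) := by
      unfold bardeenRho bardeenPt
      rw [hkey]
      have hpi := Real.pi_ne_zero
      field_simp
      ring
    rw [heq]
    have hpi := Real.pi_pos
    positivity
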